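/- Let k be a ring and let f : V → U, g : V → W, p : W → V be k-module maps with p ∘ g = id_V. Then: (i) the map (f, −g) : V → U ⊕ W, v ↦ (f(v), −g(v)), is injective; (ii) the map U ⊕ W → U, (u, w) ↦ u + f(p(w)), vanishes on the image of (f, −g) and hence induces a map π : X → U, where X is the cokernel of (f, −g); and (iii) π ∘ ι = id_U, where ι : U → X is the map induced by the inclusion u ↦ (u, 0). -/
import Mathlib

/-- Let `k` be a ring and let `f : V → U`, `g : V → W`, `p : W → V` be `k`-module maps
with `p ∘ g = id`.  Then: (i) the map `(f, -g) : V → U ⊕ W` is injective;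
(ii) the map `U ⊕ W → U`, `(u, w) ↦ u + f (p w)`, vanishes on the image of `(f, -g)`
and hence induces a map `π : X → U` on the cokernel `X` of `(f, -g)`; and
(iii) `π ∘ ι = id` where `ι : U → X` is induced by `u ↦ (u, 0)`. -/
theorem stmt_5 (k : Type*) [Ring k] (V U W : Type*)
    [AddCommGroup V] [AddCommGroup U] [AddCommGroup W]
    [Module k V] [Module k U] [Module k W]
    (f : V →ₗ[k] U) (g : V →ₗ[k] W) (p : W →ₗ[k] V)
    (hpg : p ∘ₗ g = LinearMap.id) :
    Function.Injective (LinearMap.prod f (-g)) ∧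
    (∀ v : V,
      (LinearMap.coprod LinearMap.id (f ∘ₗ p) : U × W →ₗ[k] U)
        (LinearMap.prod f (-g) v) = 0) ∧
    ∃ π : ((U × W) ⧸ LinearMap.range (LinearMap.prod f (-g))) →ₗ[k] U,
      π ∘ₗ (LinearMap.range (LinearMap.prod f (-g))).mkQ =
        LinearMap.coprod LinearMap.id (f ∘ₗ p) ∧
      π ∘ₗ ((LinearMap.range (LinearMap.prod f (-g))).mkQ ∘ₗ LinearMap.inl k U W) =
        LinearMap.id := by
  have hpg' : ∀ v, p (g v) = v := fun v => congrArg (· v) (congrArg DFunLike.coe hpg)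
  have hvan : ∀ v : V,
      (LinearMap.coprod LinearMap.id (f ∘ₗ p) : U × W →ₗ[k] U)
        (LinearMap.prod f (-g) v) = 0 := by
    intro v
    simp [LinearMap.coprod_apply, LinearMap.prod_apply, hpg' v]
  refine ⟨?_, hvan, ?_⟩
  · intro a b hab
    have := congrArg Prod.snd hab
    simp only [LinearMap.prod_apply, Pi.prod, LinearMap.neg_apply] at this
    have : g a = g b := neg_injective this
    calc a = p (g a) := (hpg' a).symm
      _ = p (g b) := by rw [this]
      _ = b := hpg' b
  · have hle : LinearMap.range (LinearMap.prod f (-g)) ≤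
        LinearMap.ker (LinearMap.coprod LinearMap.id (f ∘ₗ p) : U × W →ₗ[k] U) := by
      rintro x ⟨v, rfl⟩
      exact hvan v
    refine ⟨(LinearMap.range (LinearMap.prod f (-g))).liftQ _ hle, ?_, ?_⟩
    · exact Submodule.liftQ_mkQ _ _ hle
    · ext u
      simp [Submodule.liftQ_apply]
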